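/- Suppose the Euler–Lagrange equation at the zero function holds: f_y(x,0,0) − (d/dx)[f_z(x,0,0)] = 0 for all x ∈ [a,b]. If p > 0 and q ≥ 0, then there exists ε > 0 such that for every y ∈ C¹[a,b] with y(a)=y(b)=0 and max_{x∈[a,b]} max(|y(x)|,|y'(x)|) < ε one has Φ(y) − Φ(0) ≥ (π²·p / (2(π² + 16(b−a)²)))·‖y‖²_{H¹[a,b]}. -/

import Mathlib

open Set MeasureTheory intervalIntegral
/-- Partial derivative of `f` with respect to the second argument `y`. -/
noncomputable def fy (f : ℝ → ℝ → ℝ → ℝ) (x y z : ℝ) : ℝ :=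
  deriv (fun u => f x u z) y

/-- Partial derivative of `f` with respect to the third argument `z`. -/
noncomputable def fz (f : ℝ → ℝ → ℝ → ℝ) (x y z : ℝ) : ℝ :=
  deriv (fun u => f x y u) z

/-- Second partial derivative `f_{yy}`. -/
noncomputable def fyy (f : ℝ → ℝ → ℝ → ℝ) (x y z : ℝ) : ℝ :=
  deriv (fun u => fy f x u z) y

/-- Mixed second partial derivative `f_{yz}`. -/
noncomputable def fyz (f : ℝ → ℝ → ℝ → ℝ) (x y z : ℝ) : ℝ :=
  deriv (fun u => fz f x u z) y

/-- Second partial derivative `f_{zz}`. -/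
noncomputable def fzz (f : ℝ → ℝ → ℝ → ℝ) (x y z : ℝ) : ℝ :=
  deriv (fun u => fz f x y u) z

/-- The Euler–Lagrange variational functional `Φ(y) = ∫_a^b f(x, y, y') dx`. -/
noncomputable def Phi (f : ℝ → ℝ → ℝ → ℝ) (a b : ℝ) (y : ℝ → ℝ) : ℝ :=
  ∫ x in a..b, f x (y x) (deriv y x)

/-- The square of the Sobolev `H¹[a,b]` norm of `y`. -/
noncomputable def H1normSq (a b : ℝ) (y : ℝ → ℝ) : ℝ :=
  ∫ x in a..b, ((y x) ^ 2 + (deriv y x) ^ 2)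

/-!
Expand `f (x, u, v)` to second order about `(x, 0, 0)`. Since `f` is `C²`, its second derivative
is uniformly continuous near the compact segment `[a, b] × {0} × {0}`, so the Taylor remainder is
at most `η (u² + v²)` for all `x ∈ [a, b]` once `|u|, |v| < ε`. Along `(y, y')` the first-order
term integrates to zero by the Euler–Lagrange equation (integrate `f_z y'` by parts), and
integrating the mixed term `2 f_yz y y'` by parts turns the second-order term into
`∫ (f_yy - (f_yz)') y² + f_zz y'² ≥ q ∫ y² + p ∫ y'²`. Hence
`Φ(y) - Φ(0) ≥ (p / 2) ∫ y'² - η ‖y‖²_{H¹}`, and the Poincaré inequality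
`∫ y² ≤ (b - a)² ∫ y'²` (with `π² < 16`) leaves room for some `η > 0` that yields the constant.
-/

section Taylor

variable {E F : Type*} [NormedAddCommGroup E] [NormedSpace ℝ E] [NormedAddCommGroup F]
  [NormedSpace ℝ F]

theorem HasDerivAt.fderiv_apply {G : E → F} (hG : ContDiff ℝ 2 G) {γ : ℝ → E} {γ' : E} {t : ℝ}
    (hγ : HasDerivAt γ γ' t) (w : E) :
    HasDerivAt (fun t => fderiv ℝ G (γ t) w) (fderiv ℝ (fderiv ℝ G) (γ t) γ' w) t := by
  simpa using ((((hG.fderiv_right (m := 1) (by norm_num)).differentiable one_ne_zero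
    _).hasFDerivAt).comp_hasDerivAt t hγ).clm_apply (hasDerivAt_const t w)

variable {g : E → ℝ}

theorem taylor_two_eq_integral (hg : ContDiff ℝ 2 g) (x h : E) :
    g (x + h) - g x - fderiv ℝ g x h =
      ∫ t in (0 : ℝ)..1, (1 - t) * fderiv ℝ (fderiv ℝ g) (x + t • h) h h := by
  have hg' : ContDiff ℝ 1 (fderiv ℝ g) := hg.fderiv_right (by norm_num)
  have hline : ∀ t : ℝ, HasDerivAt (fun t : ℝ => x + t • h) h t := fun t => by
    simpa using ((hasDerivAt_id t).smul_const h).const_add x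
  have hφ : ∀ t : ℝ, HasDerivAt (fun t : ℝ => g (x + t • h)) (fderiv ℝ g (x + t • h) h) t :=
    fun t => ((hg.differentiable (by norm_num) _).hasFDerivAt).comp_hasDerivAt t (hline t)
  have hψc : Continuous fun t : ℝ => fderiv ℝ g (x + t • h) h := by
    have := hg'.continuous; fun_prop
  have hψ'c : Continuous fun t : ℝ => fderiv ℝ (fderiv ℝ g) (x + t • h) h h := by
    have := hg'.continuous_fderiv one_ne_zero; fun_prop
  rw [integral_mul_deriv_eq_deriv_mul (u' := fun _ => -1)
      (fun t _ => by simpa using (hasDerivAt_id t).const_sub 1)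
      (fun t _ => (hline t).fderiv_apply hg h)
      intervalIntegrable_const (hψ'c.intervalIntegrable 0 1),
    intervalIntegral.integral_const_mul, integral_eq_sub_of_hasDerivAt (fun t _ => hφ t)
      (hψc.intervalIntegrable 0 1)]
  simp only [sub_self, one_smul, zero_mul, sub_zero, zero_smul, add_zero, one_mul, zero_sub,
    neg_mul, neg_sub]
  ring

theorem abs_taylor_two_le (hg : ContDiff ℝ 2 g) {x h : E} {η : ℝ}
    (hη : ∀ t ∈ Icc (0 : ℝ) 1,
      ‖fderiv ℝ (fderiv ℝ g) (x + t • h) - fderiv ℝ (fderiv ℝ g) x‖ ≤ η) :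
    |g (x + h) - g x - fderiv ℝ g x h - fderiv ℝ (fderiv ℝ g) x h h / 2| ≤ η * ‖h‖ ^ 2 := by
  rw [taylor_two_eq_integral hg]
  set B := fderiv ℝ (fderiv ℝ g)
  have hBc : Continuous fun t : ℝ => B (x + t • h) h h := by
    have := (hg.fderiv_right (m := 1) (by norm_num)).continuous_fderiv one_ne_zero; fun_prop
  have hhalf : B x h h / 2 = ∫ t in (0 : ℝ)..1, (1 - t) * B x h h := by
    rw [intervalIntegral.integral_mul_const, intervalIntegral.integral_sub intervalIntegrable_const
      intervalIntegral.intervalIntegrable_id, integral_id, intervalIntegral.integral_const]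
    ring
  rw [hhalf, ← intervalIntegral.integral_sub (Continuous.intervalIntegrable (by fun_prop) _ _)
    (Continuous.intervalIntegrable (by fun_prop) _ _), ← Real.norm_eq_abs]
  refine (intervalIntegral.norm_integral_le_of_norm_le_const (C := η * ‖h‖ ^ 2)
    fun t ht => ?_).trans_eq (by norm_num)
  rw [uIoc_of_le zero_le_one] at ht
  obtain ⟨ht0, ht1⟩ := ht
  calc ‖(1 - t) * B (x + t • h) h h - (1 - t) * B x h h‖
      = |1 - t| * ‖(B (x + t • h) - B x) h h‖ := by
        rw [← mul_sub, norm_mul, Real.norm_eq_abs]; rfl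
    _ ≤ 1 * (η * ‖h‖ ^ 2) := by
        gcongr
        · exact abs_le.2 ⟨by linarith, by linarith⟩
        · calc ‖(B (x + t • h) - B x) h h‖ ≤ ‖B (x + t • h) - B x‖ * ‖h‖ * ‖h‖ :=
                (B (x + t • h) - B x).le_opNorm₂ h h
            _ ≤ η * ‖h‖ ^ 2 := by
                rw [mul_assoc, ← sq]; gcongr; exact hη t ⟨ht0.le, ht1⟩
    _ = η * ‖h‖ ^ 2 := one_mul _

theorem exists_pos_forall_abs_taylor_two_le (hg : ContDiff ℝ 2 g) {K : Set E}
    (hK : IsCompact K) {η : ℝ} (hη : 0 < η) :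
    ∃ δ > 0, ∀ x ∈ K, ∀ h : E, ‖h‖ < δ →
      |g (x + h) - g x - fderiv ℝ g x h - fderiv ℝ (fderiv ℝ g) x h h / 2| ≤ η * ‖h‖ ^ 2 := by
  have hB : Continuous (fderiv ℝ (fderiv ℝ g)) :=
    (hg.fderiv_right (m := 1) (by norm_num)).continuous_fderiv one_ne_zero
  obtain ⟨δ, hδ, hδB⟩ := Metric.mem_uniformity_dist.1 <|
    hK.uniformContinuousAt_of_continuousAt _ (fun x _ => hB.continuousAt)
      (Metric.dist_mem_uniformity (α := E →L[ℝ] E →L[ℝ] ℝ) hη)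
  refine ⟨δ, hδ, fun x hx h hh => abs_taylor_two_le hg fun t ⟨ht0, ht1⟩ => ?_⟩
  have hdist : dist x (x + t • h) < δ := by
    rw [dist_self_add_right, norm_smul, Real.norm_eq_abs, abs_of_nonneg ht0]
    nlinarith [norm_nonneg h]
  have hclose : dist (fderiv ℝ (fderiv ℝ g) x) (fderiv ℝ (fderiv ℝ g) (x + t • h)) < η :=
    hδB hdist hx
  rw [dist_comm] at hclose
  exact (dist_eq_norm (fderiv ℝ (fderiv ℝ g) (x + t • h)) _ ▸ hclose).le

end Taylor

def uncurry3 (f : ℝ → ℝ → ℝ → ℝ) (pt : ℝ × ℝ × ℝ) : ℝ := f pt.1 pt.2.1 pt.2.2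

theorem hasDerivAt_mk_snd (x y z : ℝ) :
    HasDerivAt (fun u : ℝ => ((x, u, z) : ℝ × ℝ × ℝ)) (0, 1, 0) y :=
  (hasDerivAt_const _ _).prodMk ((hasDerivAt_id _).prodMk (hasDerivAt_const _ _))

theorem hasDerivAt_mk_thd (x y z : ℝ) :
    HasDerivAt (fun u : ℝ => ((x, y, u) : ℝ × ℝ × ℝ)) (0, 0, 1) z :=
  (hasDerivAt_const _ _).prodMk ((hasDerivAt_const _ _).prodMk (hasDerivAt_id _))

section PartialDerivatives

variable {f : ℝ → ℝ → ℝ → ℝ} (hf : ContDiff ℝ 2 (uncurry3 f))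
include hf

theorem fy_eq_fderiv (x y z : ℝ) : fy f x y z = fderiv ℝ (uncurry3 f) (x, y, z) (0, 1, 0) :=
  ((hf.differentiable two_ne_zero _).hasFDerivAt.comp_hasDerivAt y (hasDerivAt_mk_snd x y z)).deriv

theorem fz_eq_fderiv (x y z : ℝ) : fz f x y z = fderiv ℝ (uncurry3 f) (x, y, z) (0, 0, 1) :=
  ((hf.differentiable two_ne_zero _).hasFDerivAt.comp_hasDerivAt z (hasDerivAt_mk_thd x y z)).deriv

theorem fyy_eq_fderiv_fderiv (x y z : ℝ) :
    fyy f x y z = fderiv ℝ (fderiv ℝ (uncurry3 f)) (x, y, z) (0, 1, 0) (0, 1, 0) := by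
  simp only [fyy, fy_eq_fderiv hf]
  exact ((hasDerivAt_mk_snd x y z).fderiv_apply hf _).deriv

theorem fyz_eq_fderiv_fderiv (x y z : ℝ) :
    fyz f x y z = fderiv ℝ (fderiv ℝ (uncurry3 f)) (x, y, z) (0, 1, 0) (0, 0, 1) := by
  simp only [fyz, fz_eq_fderiv hf]
  exact ((hasDerivAt_mk_snd x y z).fderiv_apply hf _).deriv

theorem fzz_eq_fderiv_fderiv (x y z : ℝ) :
    fzz f x y z = fderiv ℝ (fderiv ℝ (uncurry3 f)) (x, y, z) (0, 0, 1) (0, 0, 1) := by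
  simp only [fzz, fz_eq_fderiv hf]
  exact ((hasDerivAt_mk_thd x y z).fderiv_apply hf _).deriv

theorem fderiv_uncurry3_apply (x y z u v : ℝ) :
    fderiv ℝ (uncurry3 f) (x, y, z) (0, u, v) = fy f x y z * u + fz f x y z * v := by
  have hw : ((0, u, v) : ℝ × ℝ × ℝ) = u • (0, 1, 0) + v • (0, 0, 1) := by simp
  rw [hw, map_add, map_smul, map_smul, fy_eq_fderiv hf, fz_eq_fderiv hf, smul_eq_mul,
    smul_eq_mul, mul_comm u, mul_comm v]

theorem fderiv_fderiv_uncurry3_apply (x y z u v : ℝ) :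
    fderiv ℝ (fderiv ℝ (uncurry3 f)) (x, y, z) (0, u, v) (0, u, v) =
      fyy f x y z * u ^ 2 + 2 * fyz f x y z * (u * v) + fzz f x y z * v ^ 2 := by
  have hw : ((0, u, v) : ℝ × ℝ × ℝ) = u • (0, 1, 0) + v • (0, 0, 1) := by simp
  have hsymm := hf.contDiffAt.isSymmSndFDerivAt (x := (x, y, z)) (by simp) (0, 0, 1) (0, 1, 0)
  rw [fyy_eq_fderiv_fderiv hf, fyz_eq_fderiv_fderiv hf, fzz_eq_fderiv_fderiv hf, hw]
  simp only [map_add, map_smul, add_apply, smul_apply, smul_eq_mul, hsymm]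
  ring

theorem continuous_fy (y z : ℝ) : Continuous fun x => fy f x y z := by
  simp only [fy_eq_fderiv hf]
  have := hf.continuous_fderiv two_ne_zero
  fun_prop

theorem contDiff_fz (y z : ℝ) : ContDiff ℝ 1 fun x => fz f x y z := by
  simp only [fz_eq_fderiv hf]
  have := hf.fderiv_right (m := 1) (by norm_num)
  fun_prop

theorem continuous_fyy (y z : ℝ) : Continuous fun x => fyy f x y z := by
  simp only [fyy_eq_fderiv_fderiv hf]
  have := (hf.fderiv_right (m := 1) (by norm_num)).continuous_fderiv one_ne_zero
  fun_prop

theorem continuous_fyz (y z : ℝ) : Continuous fun x => fyz f x y z := by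
  simp only [fyz_eq_fderiv_fderiv hf]
  have := (hf.fderiv_right (m := 1) (by norm_num)).continuous_fderiv one_ne_zero
  fun_prop

theorem continuous_fzz (y z : ℝ) : Continuous fun x => fzz f x y z := by
  simp only [fzz_eq_fderiv_fderiv hf]
  have := (hf.fderiv_right (m := 1) (by norm_num)).continuous_fderiv one_ne_zero
  fun_prop

theorem exists_pos_forall_abs_sub_taylor_le (a b : ℝ) {η : ℝ} (hη : 0 < η) :
    ∃ ε > 0, ∀ x ∈ Icc a b, ∀ u v : ℝ, max |u| |v| < ε →
      |f x u v - f x 0 0 - (fy f x 0 0 * u + fz f x 0 0 * v) -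
        (fyy f x 0 0 * u ^ 2 + 2 * fyz f x 0 0 * (u * v) + fzz f x 0 0 * v ^ 2) / 2| ≤
        η * (u ^ 2 + v ^ 2) := by
  have hK : IsCompact ((fun x : ℝ => ((x, 0, 0) : ℝ × ℝ × ℝ)) '' Icc a b) :=
    isCompact_Icc.image (by fun_prop)
  obtain ⟨ε, hε, hT⟩ := exists_pos_forall_abs_taylor_two_le hf hK hη
  refine ⟨ε, hε, fun x hx u v huv => ?_⟩
  have hnorm : ‖((0, u, v) : ℝ × ℝ × ℝ)‖ = max |u| |v| := by simp [Prod.norm_def]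
  have hmax : max |u| |v| ^ 2 ≤ u ^ 2 + v ^ 2 := by
    rcases le_total |u| |v| with h | h <;> simp [h, sq_abs, sq_nonneg]
  have := hT _ ⟨x, hx, rfl⟩ (0, u, v) (hnorm ▸ huv)
  rw [fderiv_uncurry3_apply hf, fderiv_fderiv_uncurry3_apply hf, hnorm] at this
  simp only [Prod.mk_add_mk, add_zero, zero_add] at this
  exact this.trans (mul_le_mul_of_nonneg_left hmax hη.le)

end PartialDerivatives

section IntervalIntegrals

variable {a b : ℝ}

theorem sq_intervalIntegral_le {g : ℝ → ℝ} (hab : a ≤ b) (hg : IntervalIntegrable g volume a b)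
    (hg2 : IntervalIntegrable (fun t => g t ^ 2) volume a b) :
    (∫ t in a..b, g t) ^ 2 ≤ (b - a) * ∫ t in a..b, g t ^ 2 := by
  rcases hab.eq_or_lt with rfl | hlt
  · simp
  set I := ∫ t in a..b, g t
  set k := I / (b - a)
  -- integrate `2 k g ≤ g² + k²` with `k` the mean value of `g`
  have hmono : ∫ t in a..b, 2 * k * g t ≤ ∫ t in a..b, (g t ^ 2 + k ^ 2) :=
    integral_mono_on hab (hg.const_mul _) (hg2.add intervalIntegrable_const)
      fun t _ => by nlinarith [sq_nonneg (g t - k)]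
  rw [intervalIntegral.integral_const_mul, intervalIntegral.integral_add hg2
    intervalIntegrable_const, intervalIntegral.integral_const, smul_eq_mul] at hmono
  have hk : k * (b - a) = I := div_mul_cancel₀ _ (sub_pos.2 hlt).ne'
  nlinarith

theorem integral_sq_le_sq_mul_integral_deriv_sq {y : ℝ → ℝ} (hab : a ≤ b) (hy : ContDiff ℝ 1 y)
    (ha : y a = 0) :
    ∫ x in a..b, y x ^ 2 ≤ (b - a) ^ 2 * ∫ x in a..b, deriv y x ^ 2 := by
  have hy' : Continuous (deriv y) := hy.continuous_deriv le_rfl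
  have hpoint : ∀ x ∈ Icc a b, y x ^ 2 ≤ (b - a) * ∫ t in a..b, deriv y t ^ 2 := by
    intro x ⟨hax, hxb⟩
    have hftc : ∫ t in a..x, deriv y t = y x := by
      rw [integral_deriv_eq_sub (fun t _ => (hy.differentiable one_ne_zero).differentiableAt)
        (hy'.intervalIntegrable a x), ha, sub_zero]
    calc y x ^ 2 ≤ (x - a) * ∫ t in a..x, deriv y t ^ 2 :=
          hftc ▸ sq_intervalIntegral_le hax (hy'.intervalIntegrable a x)
            ((hy'.pow 2).intervalIntegrable a x)
      _ ≤ (b - a) * ∫ t in a..b, deriv y t ^ 2 := by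
          gcongr
          · exact intervalIntegral.integral_nonneg hax fun t _ => sq_nonneg _
          · exact integral_mono_interval le_rfl hax hxb
              (Filter.Eventually.of_forall fun t => sq_nonneg _)
              ((hy'.pow 2).intervalIntegrable a b)
  calc ∫ x in a..b, y x ^ 2 ≤ ∫ _ in a..b, (b - a) * ∫ t in a..b, deriv y t ^ 2 :=
        integral_mono_on hab ((hy.continuous.pow 2).intervalIntegrable a b)
          intervalIntegrable_const hpoint
    _ = (b - a) ^ 2 * ∫ x in a..b, deriv y x ^ 2 := by
        rw [intervalIntegral.integral_const, smul_eq_mul]; ring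

theorem integral_mul_add_mul_deriv_eq_zero {A u v : ℝ → ℝ} (hu : ContDiff ℝ 1 u)
    (hv : ContDiff ℝ 1 v) (hA : ∀ x ∈ uIcc a b, A x = deriv u x) (ha : v a = 0) (hb : v b = 0) :
    ∫ x in a..b, (A x * v x + u x * deriv v x) = 0 := by
  rw [integral_congr (g := fun x => deriv u x * v x + u x * deriv v x) fun x hx => by
      simp only [hA x hx],
    integral_deriv_mul_eq_sub (fun x _ => (hu.differentiable one_ne_zero x).hasDerivAt)
    (fun x _ => (hv.differentiable one_ne_zero x).hasDerivAt)
    ((hu.continuous_deriv le_rfl).intervalIntegrable a b)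
    ((hv.continuous_deriv le_rfl).intervalIntegrable a b), ha, hb]
  ring

theorem mul_integral_sq_add_le_integral_quadratic {A B C y : ℝ → ℝ} {p q : ℝ} (hab : a ≤ b)
    (hA : Continuous A) (hB : ContDiff ℝ 1 B) (hC : Continuous C) (hy : ContDiff ℝ 1 y)
    (ha : y a = 0) (hb : y b = 0) (hq : ∀ x ∈ Icc a b, q ≤ A x - deriv B x)
    (hp : ∀ x ∈ Icc a b, p ≤ C x) :
    q * (∫ x in a..b, y x ^ 2) + p * ∫ x in a..b, deriv y x ^ 2 ≤
      ∫ x in a..b, (A x * y x ^ 2 + 2 * B x * (y x * deriv y x) + C x * deriv y x ^ 2) := by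
  have hyc := hy.continuous
  have hy'c := hy.continuous_deriv le_rfl
  have hB'c := hB.continuous_deriv le_rfl
  have hBc := hB.continuous
  have hderiv : ∀ x, deriv (fun t => y t ^ 2) x = 2 * y x * deriv y x := fun x => by
    simpa using ((hy.differentiable one_ne_zero x).hasDerivAt.fun_pow 2).deriv
  -- the mixed term is integrated by parts against `y ^ 2`, which vanishes at both ends
  have hparts : ∫ x in a..b, (deriv B x * y x ^ 2 + B x * (2 * y x * deriv y x)) = 0 := by
    simpa only [hderiv] using
      integral_mul_add_mul_deriv_eq_zero hB (hy.pow 2) (fun _ _ => rfl) (by simp [ha])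
        (by simp [hb])
  calc q * (∫ x in a..b, y x ^ 2) + p * ∫ x in a..b, deriv y x ^ 2
      = ∫ x in a..b, (q * y x ^ 2 + p * deriv y x ^ 2) := by
        rw [intervalIntegral.integral_add, intervalIntegral.integral_const_mul,
          intervalIntegral.integral_const_mul] <;>
          exact Continuous.intervalIntegrable (by fun_prop) _ _
    _ ≤ ∫ x in a..b, ((A x - deriv B x) * y x ^ 2 + C x * deriv y x ^ 2) :=
        integral_mono_on hab (Continuous.intervalIntegrable (by fun_prop) _ _)
          (Continuous.intervalIntegrable (by fun_prop) _ _) fun x hx => by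
            gcongr
            · exact hq x hx
            · exact hp x hx
    _ = (∫ x in a..b, ((A x - deriv B x) * y x ^ 2 + C x * deriv y x ^ 2)) +
          ∫ x in a..b, (deriv B x * y x ^ 2 + B x * (2 * y x * deriv y x)) := by
        rw [hparts, add_zero]
    _ = ∫ x in a..b, (A x * y x ^ 2 + 2 * B x * (y x * deriv y x) + C x * deriv y x ^ 2) := by
        rw [← intervalIntegral.integral_add (Continuous.intervalIntegrable (by fun_prop) _ _)
          (Continuous.intervalIntegrable (by fun_prop) _ _)]
        congr 1; ext x; ring

end IntervalIntegrals

theorem H1normSq_eq {a b : ℝ} {y : ℝ → ℝ} (hy : ContDiff ℝ 1 y) :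
    H1normSq a b y = (∫ x in a..b, y x ^ 2) + ∫ x in a..b, deriv y x ^ 2 :=
  intervalIntegral.integral_add ((hy.continuous.pow 2).intervalIntegrable a b)
    (((hy.continuous_deriv le_rfl).pow 2).intervalIntegrable a b)

theorem integral_taylor_le_Phi_sub_Phi_zero {f : ℝ → ℝ → ℝ → ℝ} {a b : ℝ}
    (hf : ContDiff ℝ 2 (uncurry3 f)) (hab : a ≤ b) {y : ℝ → ℝ} (hy : ContDiff ℝ 1 y) {η : ℝ}
    (hη : ∀ x ∈ Icc a b,
      |f x (y x) (deriv y x) - f x 0 0 - (fy f x 0 0 * y x + fz f x 0 0 * deriv y x) -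
        (fyy f x 0 0 * y x ^ 2 + 2 * fyz f x 0 0 * (y x * deriv y x) +
          fzz f x 0 0 * deriv y x ^ 2) / 2| ≤ η * (y x ^ 2 + deriv y x ^ 2)) :
    (∫ x in a..b, (fy f x 0 0 * y x + fz f x 0 0 * deriv y x)) +
        (∫ x in a..b, (fyy f x 0 0 * y x ^ 2 + 2 * fyz f x 0 0 * (y x * deriv y x) +
          fzz f x 0 0 * deriv y x ^ 2)) / 2 - η * H1normSq a b y ≤
      Phi f a b y - Phi f a b (fun _ => 0) := by
  have hyc := hy.continuous
  have hy'c := hy.continuous_deriv le_rfl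
  have hfy := continuous_fy hf 0 0
  have hfz := (contDiff_fz hf 0 0).continuous
  have hfyy := continuous_fyy hf 0 0
  have hfyz := continuous_fyz hf 0 0
  have hfzz := continuous_fzz hf 0 0
  have hf₀ : Continuous fun x => f x 0 0 :=
    hf.continuous.comp (by fun_prop : Continuous fun x : ℝ => ((x, 0, 0) : ℝ × ℝ × ℝ))
  have hf₁ : Continuous fun x => f x (y x) (deriv y x) :=
    hf.continuous.comp (by fun_prop : Continuous fun x => ((x, y x, deriv y x) : ℝ × ℝ × ℝ))
  calc _ = ∫ x in a..b, ((fy f x 0 0 * y x + fz f x 0 0 * deriv y x) +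
          (fyy f x 0 0 * y x ^ 2 + 2 * fyz f x 0 0 * (y x * deriv y x) +
            fzz f x 0 0 * deriv y x ^ 2) / 2 - η * (y x ^ 2 + deriv y x ^ 2)) := by
        rw [H1normSq, ← intervalIntegral.integral_div, ← intervalIntegral.integral_const_mul,
          ← intervalIntegral.integral_add, ← intervalIntegral.integral_sub] <;>
          exact Continuous.intervalIntegrable (by fun_prop) _ _
    _ ≤ ∫ x in a..b, (f x (y x) (deriv y x) - f x 0 0) :=
        integral_mono_on hab (Continuous.intervalIntegrable (by fun_prop) _ _)
          ((hf₁.sub hf₀).intervalIntegrable a b) fun x hx => by linarith [(abs_le.1 (hη x hx)).1]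
    _ = Phi f a b y - Phi f a b (fun _ => 0) := by
        rw [Phi, Phi, intervalIntegral.integral_sub (hf₁.intervalIntegrable a b)
          (hf₀.intervalIntegrable a b)]
        simp

theorem pi_sq_mul_div_lt {p L : ℝ} (hp : 0 < p) (hL : L ≠ 0) :
    Real.pi ^ 2 * p / (2 * (Real.pi ^ 2 + 16 * L ^ 2)) < p / (2 * (1 + L ^ 2)) := by
  have hπ : Real.pi ^ 2 < 16 := by nlinarith [Real.pi_pos, Real.pi_lt_four]
  rw [div_lt_div_iff₀ (by positivity) (by positivity)]
  nlinarith [mul_pos (mul_pos hp (sq_pos_of_ne_zero hL)) (sub_pos.2 hπ)]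

theorem statement3
    (a b : ℝ) (hab : a < b)
    (f : ℝ → ℝ → ℝ → ℝ)
    (hf : ContDiff ℝ 2 (fun pt : ℝ × ℝ × ℝ => f pt.1 pt.2.1 pt.2.2))
    (hfyz : ContDiff ℝ 1 (fun pt : ℝ × ℝ × ℝ => fyz f pt.1 pt.2.1 pt.2.2))
    (hEL : ∀ x ∈ Set.Icc a b, fy f x 0 0 - deriv (fun t => fz f t 0 0) x = 0)
    (p q : ℝ)
    (hp : IsLeast ((fun x => fzz f x 0 0) '' Set.Icc a b) p)
    (hq : IsLeast ((fun x => fyy f x 0 0 - deriv (fun t => fyz f t 0 0) x) '' Set.Icc a b) q)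
    (hppos : 0 < p) (hqnonneg : 0 ≤ q) :
    ∃ ε > 0, ∀ y : ℝ → ℝ, ContDiff ℝ 1 y → y a = 0 → y b = 0 →
      (∀ x ∈ Set.Icc a b, max |y x| |deriv y x| < ε) →
      Phi f a b y - Phi f a b (fun _ => 0) ≥
        Real.pi ^ 2 * p / (2 * (Real.pi ^ 2 + 16 * (b - a) ^ 2)) * H1normSq a b y := by
  set c := Real.pi ^ 2 * p / (2 * (Real.pi ^ 2 + 16 * (b - a) ^ 2))
  set m := p / (2 * (1 + (b - a) ^ 2))
  have hcm : c < m := pi_sq_mul_div_lt hppos (sub_pos.2 hab).ne'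
  obtain ⟨ε, hε, htaylor⟩ := exists_pos_forall_abs_sub_taylor_le hf a b (sub_pos.2 hcm)
  refine ⟨ε, hε, fun y hy hya hyb hsmall => ?_⟩
  have hlower := integral_taylor_le_Phi_sub_Phi_zero hf hab.le hy fun x hx =>
    htaylor x hx _ _ (hsmall x hx)
  have hfirst := integral_mul_add_mul_deriv_eq_zero (contDiff_fz hf 0 0) hy
    (fun x hx => sub_eq_zero.1 (hEL x (uIcc_of_le hab.le ▸ hx))) hya hyb
  have hfyz0 : ContDiff ℝ 1 fun x => fyz f x 0 0 :=
    hfyz.comp (by fun_prop : ContDiff ℝ 1 fun x : ℝ => ((x, 0, 0) : ℝ × ℝ × ℝ))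
  have hsecond := mul_integral_sq_add_le_integral_quadratic hab.le (continuous_fyy hf 0 0) hfyz0
    (continuous_fzz hf 0 0) hy hya hyb (fun x hx => hq.2 ⟨x, hx, rfl⟩)
    (fun x hx => hp.2 ⟨x, hx, rfl⟩)
  have hpoinc := integral_sq_le_sq_mul_integral_deriv_sq hab.le hy hya
  rw [H1normSq_eq hy] at hlower ⊢
  set S₁ := ∫ x in a..b, y x ^ 2
  set S₂ := ∫ x in a..b, deriv y x ^ 2
  have hS₁ : 0 ≤ S₁ := intervalIntegral.integral_nonneg hab.le fun x _ => sq_nonneg _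
  have hm : m * (S₁ + S₂) ≤ p / 2 * S₂ := by
    calc m * (S₁ + S₂) ≤ m * ((1 + (b - a) ^ 2) * S₂) := by
          have hm0 : 0 ≤ m := by simp only [m]; positivity
          gcongr
          linarith
      _ = p / 2 * S₂ := by simp only [m]; field_simp
  linarith [mul_nonneg hqnonneg hS₁]
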